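/- arXiv:2504.21203 — 2 statements merged into one kernel-verified Lean document; each statement's English description precedes it below -/
import Mathlib

section
/- Let G be a group acting by isometries on a metric space S, let s ∈ S, and let q : G → ℝ be a quasi-character (quasi-morphism restricting to a homomorphism on cyclic subgroups) such that there exists M ≥ 0 with |q(g)| ≤ M·d_S(s, gs) + M for all g ∈ G. If g ∈ G satisfies |q(g)| > 0, then the translation length of g is positive: τ(g) = lim_{n→∞} d_S(s, gⁿs)/n ≥ |q(g)|/M > 0. -/
open Filter Topology

/-- If q is a quasi-character subordinate to an isometric action G ↷ S (so that
|q(g)| ≤ M·d(s,gs) + M) and |q(g)| > 0, then the translation length of g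
satisfies τ(g) ≥ |q(g)|/M > 0; in particular g is loxodromic. -/
theorem stmt9 {G S : Type*} [Group G] [MetricSpace S] [MulAction G S]
    (hiso : ∀ (g : G) (x y : S), dist (g • x) (g • y) = dist x y)
    (s : S) (q : G → ℝ) (D : ℝ)
    (hD : ∀ g h : G, |q (g * h) - q g - q h| ≤ D)
    (hhom : ∀ (g : G) (k : ℤ), q (g ^ k) = (k : ℝ) * q g)
    (M : ℝ) (hM : 0 ≤ M)
    (hsub : ∀ g : G, |q g| ≤ M * dist s (g • s) + M)
    (g : G) (hg : 0 < |q g|) (τ : ℝ)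
    (hτ : Tendsto (fun n : ℕ => dist s (g ^ n • s) / (n : ℝ)) atTop (𝓝 τ)) :
    |q g| / M ≤ τ ∧ 0 < τ := by
  have hM0 : 0 < M := by
    rcases hM.lt_or_eq with h | h
    · exact h
    · exfalso
      have := hsub g
      rw [← h] at this
      simp at this
      exact absurd this (abs_pos.mp hg)
  -- key bound: for n ≥ 1, |q g|/M - 1/n ≤ dist s (g^n • s) / n
  have key : ∀ n : ℕ, 1 ≤ n → |q g| / M - 1 / (n : ℝ) ≤ dist s (g ^ n • s) / n := by
    intro n hn
    have hnpos : (0 : ℝ) < n := by exact_mod_cast hn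
    have hq : (n : ℝ) * |q g| ≤ M * dist s (g ^ n • s) + M := by
      have := hsub (g ^ n)
      have h2 : q (g ^ n) = (n : ℝ) * q g := by
        have := hhom g (n : ℤ)
        simpa using this
      rw [h2] at this
      rwa [abs_mul, abs_of_nonneg (by positivity : (0:ℝ) ≤ (n:ℝ))] at this
    rw [div_sub_div _ _ (ne_of_gt hM0) (ne_of_gt hnpos), div_le_div_iff₀ (by positivity) hnpos]
    nlinarith [dist_nonneg (x := s) (y := g ^ n • s)]
  have hlim : Tendsto (fun n : ℕ => |q g| / M - 1 / (n : ℝ)) atTop (𝓝 (|q g| / M)) := by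
    have h1 : Tendsto (fun n : ℕ => 1 / (n : ℝ)) atTop (𝓝 0) :=
      tendsto_one_div_atTop_nhds_zero_nat
    simpa using (tendsto_const_nhds (x := |q g| / M)).sub h1
  have hle : |q g| / M ≤ τ :=
    le_of_tendsto_of_tendsto hlim hτ (eventually_atTop.mpr ⟨1, key⟩)
  exact ⟨hle, lt_of_lt_of_le (by positivity) hle⟩
end

section
/- Let Π = ∏_{n ∈ ℕ} {1, …, n}. For A ⊆ ℕ, define f_A ∈ Π by f_A(n) = n if n ∈ A and f_A(n) = 1 otherwise. Then for all A, B ⊆ ℕ: sup_n (f_A(n) − f_B(n)) < ∞ if and only if A \ B is finite. Consequently f_A E_{K_σ} f_B if and only if the symmetric difference A △ B is finite, so the map A ↦ f_A induces an order-embedding of the Boolean algebra P(ℕ)/fin into Π/E_{K_σ} ordered by Q_{K_σ}. -/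
open Classical in
/-- For A ⊆ ℕ, the element f_A of Π = ∏_n {1,…,n+1}: f_A(n) = n+1 if n ∈ A, else 1. -/
noncomputable def fA (A : Set ℕ) : (n : ℕ) → {k : ℕ // 1 ≤ k ∧ k ≤ n + 1} :=
  fun n => ⟨if n ∈ A then n + 1 else 1, by split <;> omega⟩

open Classical in
lemma fA_val (A : Set ℕ) (n : ℕ) :
    ((fA A n : ℕ) : ℤ) = if n ∈ A then (n : ℤ) + 1 else 1 := by
  simp only [fA]
  split <;> simp

lemma aux13 (A B : Set ℕ) :
    (∃ k : ℤ, ∀ n : ℕ, ((fA A n : ℕ) : ℤ) - ((fA B n : ℕ) : ℤ) ≤ k) ↔ (A \ B).Finite := by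
  constructor
  · rintro ⟨k, hk⟩
    by_contra hinf
    have hinf' : (A \ B).Infinite := hinf
    obtain ⟨n, hn, hgt⟩ := hinf'.exists_gt k.toNat
    have := hk n
    rw [fA_val, fA_val, if_pos hn.1, if_neg hn.2] at this
    omega
  · intro hf
    refine ⟨(hf.toFinset.sup id : ℕ), fun n => ?_⟩
    rw [fA_val, fA_val]
    by_cases hA : n ∈ A
    · by_cases hB : n ∈ B
      · simp [hA, hB]
      · have hn : n ∈ hf.toFinset := by simp [hA, hB]
        have := Finset.le_sup (f := id) hn
        simp only [hA, hB, if_pos, if_neg, id] at this ⊢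
        simp only [if_true, if_false]
        omega
    · rw [if_neg hA]
      split <;> omega

/-- sup_n (f_A(n) − f_B(n)) < ∞ iff A \ B is finite, and f_A E_{K_σ} f_B iff the
symmetric difference A △ B is finite; hence A ↦ f_A induces an order-embedding of
P(ℕ)/fin into Π/E_{K_σ} ordered by Q_{K_σ}. -/
theorem stmt13 (A B : Set ℕ) :
    ((∃ k : ℤ, ∀ n : ℕ, ((fA A n : ℕ) : ℤ) - ((fA B n : ℕ) : ℤ) ≤ k) ↔ (A \ B).Finite) ∧
    ((∃ k : ℤ, ∀ n : ℕ, |((fA A n : ℕ) : ℤ) - ((fA B n : ℕ) : ℤ)| ≤ k) ↔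
      (symmDiff A B).Finite) := by
  refine ⟨aux13 A B, ?_⟩
  have hsd : symmDiff A B = (A \ B) ∪ (B \ A) := by
    rw [Set.symmDiff_def]
  rw [hsd, Set.finite_union, ← aux13 A B, ← aux13 B A]
  constructor
  · rintro ⟨k, hk⟩
    exact ⟨⟨k, fun n => (abs_le.1 (hk n)).2⟩, ⟨k, fun n => by have := (abs_le.1 (hk n)).1; omega⟩⟩
  · rintro ⟨⟨k₁, h₁⟩, ⟨k₂, h₂⟩⟩
    refine ⟨max k₁ k₂, fun n => abs_le.2 ⟨?_, ?_⟩⟩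
    · have := h₂ n; have := le_max_right k₁ k₂; omega
    · have := h₁ n; have := le_max_left k₁ k₂; omega
end
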